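/- arXiv:2203.13002 — 4 statements merged into one kernel-verified Lean document; each statement's English description precedes it below -/
import Mathlib

section
/- Let L > 2π be fixed. For every c ∈ (-1,1) with ω := 1 - c² ∈ (4π²/L², 1), there exists a smooth, even, nonconstant, L-periodic function φ: ℝ → ℝ which has exactly two zeros in [0,L) and satisfies the ordinary differential equation -φ''(x) + ωφ(x) - φ(x)⁵ = 0 for all x ∈ ℝ. -/
/-!
Seek the solution as `φ = m cos θ` (with `ω` written `w` below). The energy identity of
`-φ'' + ωφ - φ⁵ = 0` at the turning point `φ = m` becomes `θ' = √Q(θ)` with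
`Q(θ) = m⁴ (1 + cos² θ + cos⁴ θ) / 3 - ω`, which is positive, even and `π`-periodic once `m⁴ > 3ω`.
So `θ` is the inverse of `t ↦ ∫₀ᵗ Q^{-1/2}`: it is smooth, odd and increases by `π` over the
half-period `T(m) = ∫₀^π Q^{-1/2}`, making `φ` even and `2T(m)`-periodic, with zeros exactly where
`θ ∈ π/2 + πℤ`. Writing `m⁴/3 - ω = e^{2s}`, `T` is continuous in `s`, at most `π e^{-s}`, and at
least `-s / √(2ω + 3)` for `s ≤ 0` because `Q ≤ (2ω + 3)(θ - π/2)²` on `[π/2 + e^s, π/2 + 1]`; by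
the intermediate value theorem some amplitude gives `2T(m) = L`.
-/

open Real Set Filter MeasureTheory intervalIntegral
open scoped ContDiff

noncomputable section

namespace CnoidalWave

section Phase

variable {F : ℝ → ℝ} {p : ℝ}

def phaseTime (F : ℝ → ℝ) (t : ℝ) : ℝ := ∫ s in (0 : ℝ)..t, (F s)⁻¹

def phase (F : ℝ → ℝ) : ℝ → ℝ := Function.invFun (phaseTime F)

structure IsAngularSpeed (F : ℝ → ℝ) : Prop where
  continuous : Continuous F
  pos : ∀ θ, 0 < F θ
  bddAbove : BddAbove (range F)

lemma phaseTime_zero : phaseTime F 0 = 0 := integral_same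

lemma phaseTime_neg (heven : ∀ θ, F (-θ) = F θ) (t : ℝ) : phaseTime F (-t) = -phaseTime F t := by
  have h := integral_comp_neg (a := 0) (b := -t) fun s => (F s)⁻¹
  simp only [heven, neg_neg, neg_zero] at h
  rw [phaseTime, h, integral_symm]
  rfl

namespace IsAngularSpeed

lemma hasDerivAt_phaseTime (hF : IsAngularSpeed F) (t : ℝ) :
    HasDerivAt (phaseTime F) (F t)⁻¹ t :=
  ((hF.continuous.inv₀ fun θ => (hF.pos θ).ne').integral_hasStrictDerivAt 0 t).hasDerivAt

lemma strictMono_phaseTime (hF : IsAngularSpeed F) : StrictMono (phaseTime F) :=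
  strictMono_of_hasDerivAt_pos hF.hasDerivAt_phaseTime fun t => inv_pos.2 (hF.pos t)

lemma phaseTime_add_of_periodic (hF : IsAngularSpeed F) (hp : F.Periodic p) (t : ℝ) :
    phaseTime F (t + p) = phaseTime F t + phaseTime F p := by
  have hint : ∀ a b : ℝ, IntervalIntegrable (fun s => (F s)⁻¹) volume a b :=
    fun a b => (hF.continuous.inv₀ fun θ => (hF.pos θ).ne').intervalIntegrable a b
  have hp' : Function.Periodic (fun s => (F s)⁻¹) p := fun s => by simp only [hp s]
  rw [phaseTime, ← integral_add_adjacent_intervals (hint 0 t) (hint t (t + p)),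
    hp'.intervalIntegral_add_eq t 0, zero_add]
  rfl

/-- For an upper bound `M` of `F`, `t ↦ phaseTime F t - t / M` is monotone, so `phaseTime F` grows
at least linearly in both directions. -/
lemma phaseTime_surjective (hF : IsAngularSpeed F) : Function.Surjective (phaseTime F) := by
  obtain ⟨M, hM⟩ := hF.bddAbove
  have hle : ∀ θ, F θ ≤ M := fun θ => hM (mem_range_self θ)
  have hM : 0 < M := (hF.pos 0).trans_le (hle 0)
  have hmono : Monotone fun t => phaseTime F t - t / M :=
    monotone_of_hasDerivAt_nonneg (fun t => (hF.hasDerivAt_phaseTime t).sub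
      ((hasDerivAt_id t).div_const M)) fun t => by
        simpa [div_eq_mul_inv] using inv_anti₀ (hF.pos t) (hle t)
  have hcont : Continuous (phaseTime F) :=
    continuous_iff_continuousAt.2 fun t => (hF.hasDerivAt_phaseTime t).continuousAt
  refine hcont.surjective ?_ ?_
  · refine tendsto_atTop_mono' _ ?_ (tendsto_id.atTop_div_const hM)
    filter_upwards [eventually_ge_atTop 0] with t ht
    simpa [phaseTime_zero] using hmono ht
  · refine tendsto_atBot_mono' _ ?_ (tendsto_id.atBot_div_const hM)
    filter_upwards [eventually_le_atBot 0] with t ht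
    simpa [phaseTime_zero] using hmono ht

lemma phaseTime_phase (hF : IsAngularSpeed F) (x : ℝ) : phaseTime F (phase F x) = x :=
  Function.rightInverse_invFun hF.phaseTime_surjective x

lemma phase_phaseTime (hF : IsAngularSpeed F) (t : ℝ) : phase F (phaseTime F t) = t :=
  Function.leftInverse_invFun hF.strictMono_phaseTime.injective t

lemma strictMono_phase (hF : IsAngularSpeed F) : StrictMono (phase F) := fun x y hxy => by
  rwa [← hF.strictMono_phaseTime.lt_iff_lt, hF.phaseTime_phase, hF.phaseTime_phase]

lemma phase_surjective (hF : IsAngularSpeed F) : Function.Surjective (phase F) :=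
  fun t => ⟨phaseTime F t, hF.phase_phaseTime t⟩

lemma hasDerivAt_phase (hF : IsAngularSpeed F) (x : ℝ) :
    HasDerivAt (phase F) (F (phase F x)) x := by
  have hcont : Continuous (phase F) :=
    hF.strictMono_phase.monotone.continuous_of_surjective hF.phase_surjective
  simpa using (hF.hasDerivAt_phaseTime (phase F x)).of_local_left_inverse
    hcont.continuousAt (inv_ne_zero (hF.pos _).ne') (.of_forall hF.phaseTime_phase)

lemma phase_zero (hF : IsAngularSpeed F) : phase F 0 = 0 := by
  simpa [phaseTime_zero] using hF.phase_phaseTime 0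

lemma phase_neg (hF : IsAngularSpeed F) (heven : ∀ θ, F (-θ) = F θ) (x : ℝ) :
    phase F (-x) = -phase F x := by
  conv_lhs => rw [← hF.phaseTime_phase x, ← phaseTime_neg heven, hF.phase_phaseTime]

lemma phase_add_phaseTime (hF : IsAngularSpeed F) (hp : F.Periodic p) (x : ℝ) :
    phase F (x + phaseTime F p) = phase F x + p := by
  conv_lhs => rw [← hF.phaseTime_phase x, ← hF.phaseTime_add_of_periodic hp, hF.phase_phaseTime]

end IsAngularSpeed

end Phase

lemma contDiff_of_hasDerivAt_comp {F θ : ℝ → ℝ} (hF : ContDiff ℝ ∞ F)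
    (hθ : ∀ x, HasDerivAt θ (F (θ x)) x) : ContDiff ℝ ∞ θ := by
  refine contDiff_infty.2 fun n => ?_
  induction n with
  | zero => exact contDiff_zero.2 (continuous_iff_continuousAt.2 fun x => (hθ x).continuousAt)
  | succ n ih =>
    rw [Nat.cast_succ, contDiff_succ_iff_deriv]
    refine ⟨fun x => (hθ x).differentiableAt, by simp, ?_⟩
    rw [show deriv θ = F ∘ θ from funext fun x => (hθ x).deriv]
    exact (hF.of_le (by exact_mod_cast le_top)).comp ih

/-- With `φ = m cos θ`, the energy identity `φ'² = w φ² - φ⁶/3 - (w m² - m⁶/3)` of the quintic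
equation becomes `θ'² = speedSq w m θ`. -/
def speedSq (w m θ : ℝ) : ℝ := m ^ 4 * (1 + cos θ ^ 2 + cos θ ^ 4) / 3 - w

def speed (w m θ : ℝ) : ℝ := √(speedSq w m θ)

section Speed

variable {w m : ℝ}

lemma sub_le_speedSq (θ : ℝ) : m ^ 4 / 3 - w ≤ speedSq w m θ := by
  have : 0 ≤ m ^ 4 * (cos θ ^ 2 + cos θ ^ 4) := by positivity
  unfold speedSq
  linarith

lemma speedSq_le (θ : ℝ) : speedSq w m θ ≤ m ^ 4 - w := by
  have h2 := cos_sq_le_one θ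
  have h4 : cos θ ^ 4 ≤ 1 := by nlinarith [sq_nonneg (cos θ)]
  have : m ^ 4 * (cos θ ^ 2 + cos θ ^ 4) ≤ m ^ 4 * 2 := by gcongr; linarith
  unfold speedSq
  linarith

lemma speedSq_pos (hm : 3 * w < m ^ 4) (θ : ℝ) : 0 < speedSq w m θ :=
  (sub_le_speedSq θ).trans_lt' (by linarith)

lemma hasDerivAt_speedSq (θ : ℝ) :
    HasDerivAt (speedSq w m) (-(2 / 3) * m ^ 4 * sin θ * (cos θ + 2 * cos θ ^ 3)) θ := by
  have h := ((((hasDerivAt_cos θ).pow 2).const_add 1).add ((hasDerivAt_cos θ).pow 4)).const_mul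
    (m ^ 4) |>.div_const 3 |>.sub_const w
  exact h.congr_deriv (by push_cast; ring)

lemma contDiff_speed (hm : 3 * w < m ^ 4) : ContDiff ℝ ∞ (speed w m) := by
  refine contDiff_iff_contDiffAt.2 fun θ => ContDiffAt.sqrt ?_ ?_
  · unfold speedSq
    fun_prop
  · exact (speedSq_pos hm θ).ne'

lemma isAngularSpeed_speed (hm : 3 * w < m ^ 4) : IsAngularSpeed (speed w m) where
  continuous := (contDiff_speed hm).continuous
  pos θ := sqrt_pos.2 (speedSq_pos hm θ)
  bddAbove := ⟨√(m ^ 4 - w), by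
    rintro _ ⟨θ, rfl⟩
    exact sqrt_le_sqrt (speedSq_le θ)⟩

lemma speed_neg (θ : ℝ) : speed w m (-θ) = speed w m θ := by
  simp only [speed, speedSq, cos_neg]

lemma periodic_speed : (speed w m).Periodic π := fun θ => by
  simp only [speed, speedSq, cos_add_pi, neg_pow, Even.neg_one_pow even_two,
    Even.neg_one_pow (by decide : Even 4), one_mul]

lemma quintic_ode_mul_cos {θ : ℝ → ℝ} (hm : 3 * w < m ^ 4)
    (hθ : ∀ x, HasDerivAt θ (speed w m (θ x)) x) (x : ℝ) :
    -(deriv (deriv fun y => m * cos (θ y)) x) + w * (m * cos (θ x)) - (m * cos (θ x)) ^ 5 = 0 := by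
  have hspeedSq : speed w m (θ x) ^ 2 = speedSq w m (θ x) :=
    sq_sqrt (speedSq_pos hm _).le
  have hderiv : deriv (fun y => m * cos (θ y)) = fun y => -(m * sin (θ y) * speed w m (θ y)) :=
    funext fun y => by
      rw [((hθ y).cos.const_mul m).deriv]
      ring
  have hspeed : HasDerivAt (fun y => speed w m (θ y))
      (-(1 / 3) * m ^ 4 * sin (θ x) * (cos (θ x) + 2 * cos (θ x) ^ 3)) x := by
    have h := ((hasDerivAt_speedSq (θ x)).comp x (hθ x)).sqrt (speedSq_pos hm (θ x)).ne'
    refine h.congr_deriv ?_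
    rw [show speed w m (θ x) = √(speedSq w m (θ x)) from rfl, Function.comp_apply]
    field_simp [(sqrt_pos.2 (speedSq_pos hm (θ x))).ne']
  have hderiv2 : HasDerivAt (fun y => -(m * sin (θ y) * speed w m (θ y)))
      (-(m * (cos (θ x) * speed w m (θ x)) * speed w m (θ x) + m * sin (θ x) *
        (-(1 / 3) * m ^ 4 * sin (θ x) * (cos (θ x) + 2 * cos (θ x) ^ 3)))) x :=
    (((hθ x).sin.const_mul m).mul hspeed).neg
  rw [hderiv, hderiv2.deriv]
  unfold speedSq at hspeedSq
  linear_combination (m * cos (θ x)) * hspeedSq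
    - (m ^ 5 * cos (θ x) * (1 + 2 * cos (θ x) ^ 2) / 3) * sin_sq_add_cos_sq (θ x)

end Speed

def halfPeriod (w m : ℝ) : ℝ := phaseTime (speed w m) π

/-- The amplitude whose energy gap `m ^ 4 / 3 - w` equals `exp (2 * s)`. -/
def amplitude (w s : ℝ) : ℝ := √(√(3 * (w + exp (2 * s))))

section HalfPeriod

variable {w s : ℝ}

lemma amplitude_pow_four (hw : 0 ≤ w) : amplitude w s ^ 4 = 3 * (w + exp (2 * s)) := by
  rw [amplitude, show 4 = 2 * 2 from rfl, pow_mul, sq_sqrt (sqrt_nonneg _),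
    sq_sqrt (by positivity)]

lemma three_mul_lt_amplitude_pow_four (hw : 0 ≤ w) : 3 * w < amplitude w s ^ 4 := by
  rw [amplitude_pow_four hw]
  linarith [exp_pos (2 * s)]

lemma speedSq_amplitude (hw : 0 ≤ w) (θ : ℝ) :
    speedSq w (amplitude w s) θ = exp (2 * s) + (w + exp (2 * s)) * (cos θ ^ 2 + cos θ ^ 4) := by
  rw [speedSq, amplitude_pow_four hw]
  ring

lemma continuous_halfPeriod_amplitude (hw : 0 ≤ w) :
    Continuous fun s => halfPeriod w (amplitude w s) := by
  simp only [halfPeriod, phaseTime, speed, speedSq_amplitude hw]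
  refine continuous_parametric_intervalIntegral_of_continuous' ?_ 0 π
  refine Continuous.inv₀ (by fun_prop) fun q => (sqrt_pos.2 ?_).ne'
  positivity

lemma halfPeriod_amplitude_le (hw : 0 ≤ w) : halfPeriod w (amplitude w s) ≤ π / exp s := by
  have hle : ∀ θ, exp s ≤ speed w (amplitude w s) θ := fun θ => by
    rw [speed, speedSq_amplitude hw, ← sqrt_sq (exp_pos s).le, ← exp_nat_mul]
    have : 0 ≤ (w + exp (2 * s)) * (cos θ ^ 2 + cos θ ^ 4) := by positivity
    exact sqrt_le_sqrt (by push_cast; linarith)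
  calc halfPeriod w (amplitude w s) ≤ ∫ _ in (0 : ℝ)..π, (exp s)⁻¹ :=
        integral_mono_on pi_pos.le
          (((isAngularSpeed_speed (three_mul_lt_amplitude_pow_four hw)).continuous.inv₀
            fun θ => ((exp_pos s).trans_le (hle θ)).ne').intervalIntegrable 0 π)
          intervalIntegrable_const fun θ _ => inv_anti₀ (exp_pos s) (hle θ)
    _ = π / exp s := by simp [div_eq_mul_inv]

/-- The source of the logarithmic blow-up of the half-period as `s → -∞`. -/
lemma speedSq_amplitude_le (hw : 0 ≤ w) (hs : s ≤ 0) {θ : ℝ} (hθ : exp s ≤ θ - π / 2) :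
    speedSq w (amplitude w s) θ ≤ (2 * w + 3) * (θ - π / 2) ^ 2 := by
  have hcos : cos θ ^ 2 ≤ (θ - π / 2) ^ 2 := by
    have h := sin_sq_le_sq (x := θ - π / 2)
    rwa [sin_sub_pi_div_two, neg_sq] at h
  have hcos4 : cos θ ^ 4 ≤ cos θ ^ 2 := by nlinarith [cos_sq_le_one θ, sq_nonneg (cos θ)]
  have hexp : exp (2 * s) ≤ (θ - π / 2) ^ 2 := by
    rw [show 2 * s = (2 : ℕ) * s by norm_num, exp_nat_mul]
    exact pow_le_pow_left₀ (exp_pos s).le hθ 2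
  have hexp1 : exp (2 * s) ≤ 1 := exp_le_one_iff.2 (by linarith)
  calc speedSq w (amplitude w s) θ
      ≤ exp (2 * s) + (w + exp (2 * s)) * (2 * (θ - π / 2) ^ 2) := by
        rw [speedSq_amplitude hw]
        gcongr
        linarith
    _ ≤ (θ - π / 2) ^ 2 + (w + 1) * (2 * (θ - π / 2) ^ 2) := by gcongr
    _ = (2 * w + 3) * (θ - π / 2) ^ 2 := by ring

lemma neg_div_le_halfPeriod_amplitude (hw : 0 ≤ w) (hs : s ≤ 0) :
    -s / √(2 * w + 3) ≤ halfPeriod w (amplitude w s) := by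
  set k := √(2 * w + 3)
  have hk : 0 < k := sqrt_pos.2 (by linarith)
  have hF := isAngularSpeed_speed (three_mul_lt_amplitude_pow_four (s := s) hw)
  have hF' : Continuous fun θ => (speed w (amplitude w s) θ)⁻¹ :=
    hF.continuous.inv₀ fun θ => (hF.pos θ).ne'
  have hes : exp s ≤ 1 := exp_le_one_iff.2 hs
  have hcomp : ∀ θ ∈ Icc (π / 2 + exp s) (π / 2 + 1),
      (k * (θ - π / 2))⁻¹ ≤ (speed w (amplitude w s) θ)⁻¹ := fun θ hθ => by
    refine inv_anti₀ (hF.pos θ) ?_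
    rw [speed, ← sqrt_sq (by nlinarith [hθ.1, exp_pos s] : 0 ≤ k * (θ - π / 2)), mul_pow,
      sq_sqrt (by linarith)]
    exact sqrt_le_sqrt (speedSq_amplitude_le hw hs (by linarith [hθ.1]))
  have hint : IntervalIntegrable (fun θ => (k * (θ - π / 2))⁻¹) volume
      (π / 2 + exp s) (π / 2 + 1) := by
    refine (ContinuousOn.inv₀ (by fun_prop) fun θ hθ => ?_).intervalIntegrable
    rw [uIcc_of_le (by linarith)] at hθ
    nlinarith [hθ.1, exp_pos s]
  have heval : ∫ θ in (π / 2 + exp s)..(π / 2 + 1), (k * (θ - π / 2))⁻¹ = -s / k := by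
    rw [integral_comp_sub_right (fun u => (k * u)⁻¹), add_sub_cancel_left, add_sub_cancel_left]
    simp only [mul_inv]
    rw [intervalIntegral.integral_const_mul, integral_inv_of_pos (exp_pos s) one_pos, one_div,
      ← exp_neg, log_exp]
    ring
  calc -s / k = ∫ θ in (π / 2 + exp s)..(π / 2 + 1), (k * (θ - π / 2))⁻¹ := heval.symm
    _ ≤ ∫ θ in (π / 2 + exp s)..(π / 2 + 1), (speed w (amplitude w s) θ)⁻¹ :=
        integral_mono_on (by linarith) hint (hF'.intervalIntegrable _ _) hcomp
    _ ≤ halfPeriod w (amplitude w s) :=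
        integral_mono_interval (by linarith [exp_pos s, pi_pos]) (by linarith)
          (by linarith [pi_gt_three]) (.of_forall fun θ => (inv_pos.2 (hF.pos θ)).le)
          (hF'.intervalIntegrable _ _)

lemma exists_halfPeriod_eq (hw : 0 ≤ w) {T : ℝ} (hT : 0 < T) :
    ∃ m, 3 * w < m ^ 4 ∧ halfPeriod w m = T := by
  have hk : 0 < √(2 * w + 3) := sqrt_pos.2 (by linarith)
  obtain ⟨s, hs⟩ : T ∈ range fun s => halfPeriod w (amplitude w s) := by
    refine mem_range_of_exists_le_of_exists_ge (continuous_halfPeriod_amplitude hw)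
      ⟨log (π / T), ?_⟩ ⟨-(T * √(2 * w + 3)), ?_⟩
    · refine (halfPeriod_amplitude_le hw).trans_eq ?_
      rw [exp_log (by positivity)]
      field_simp
    · refine le_trans (le_of_eq ?_) (neg_div_le_halfPeriod_amplitude hw (by nlinarith))
      field_simp
  exact ⟨amplitude w s, three_mul_lt_amplitude_pow_four hw, hs⟩

end HalfPeriod

lemma cos_eq_zero_iff_of_mem_Ico {θ : ℝ} (hθ : θ ∈ Ico 0 (2 * π)) :
    cos θ = 0 ↔ θ = π / 2 ∨ θ = 3 * π / 2 := by
  constructor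
  · intro h
    obtain ⟨k, rfl⟩ := cos_eq_zero_iff.1 h
    have hk0 : (0 : ℝ) ≤ 2 * k + 1 := by nlinarith [hθ.1, pi_pos]
    have hk1 : (2 * k + 1 : ℝ) < 4 := by nlinarith [hθ.2, pi_pos]
    obtain rfl | rfl : k = 0 ∨ k = 1 := by
      have : (0 : ℤ) ≤ 2 * k + 1 := by exact_mod_cast hk0
      have : (2 * k + 1 : ℤ) < 4 := by exact_mod_cast hk1
      omega
    · left; push_cast; ring
    · right; push_cast; ring
  · rintro (rfl | rfl)
    · exact cos_pi_div_two
    · rw [show 3 * π / 2 = π / 2 + π by ring, cos_add_pi, cos_pi_div_two, neg_zero]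

lemma exists_two_zeros_cos_comp {θ : ℝ → ℝ} {L : ℝ} (hθ : StrictMono θ)
    (hsurj : Function.Surjective θ) (h0 : θ 0 = 0) (hL : θ L = 2 * π) :
    ∃ z₁ z₂, z₁ ∈ Ico 0 L ∧ z₂ ∈ Ico 0 L ∧ z₁ ≠ z₂ ∧
      ∀ x ∈ Ico 0 L, (cos (θ x) = 0 ↔ x = z₁ ∨ x = z₂) := by
  have hIco : ∀ x, x ∈ Ico 0 L ↔ θ x ∈ Ico 0 (2 * π) := fun x => by
    conv_rhs => rw [mem_Ico, ← h0, ← hL, hθ.le_iff_le, hθ.lt_iff_lt]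
    rfl
  obtain ⟨z₁, hz₁⟩ := hsurj (π / 2)
  obtain ⟨z₂, hz₂⟩ := hsurj (3 * π / 2)
  refine ⟨z₁, z₂, (hIco z₁).2 ?_, (hIco z₂).2 ?_, fun h => ?_, fun x hx => ?_⟩
  · rw [hz₁]; constructor <;> linarith [pi_pos]
  · rw [hz₂]; constructor <;> linarith [pi_pos]
  · have := hz₂ ▸ hz₁ ▸ congrArg θ h
    linarith [pi_pos]
  · rw [cos_eq_zero_iff_of_mem_Ico ((hIco x).1 hx), ← hz₁, ← hz₂, hθ.injective.eq_iff,
      hθ.injective.eq_iff]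

theorem exists_cnoidal_wave {w L : ℝ} (hw : 0 ≤ w) (hL : 0 < L) :
    ∃ φ : ℝ → ℝ,
      ContDiff ℝ (⊤ : ℕ∞) φ ∧
      (∀ x, φ (-x) = φ x) ∧
      (¬ ∃ k : ℝ, ∀ x, φ x = k) ∧
      Function.Periodic φ L ∧
      (∃ z₁ z₂, z₁ ∈ Set.Ico (0 : ℝ) L ∧ z₂ ∈ Set.Ico (0 : ℝ) L ∧ z₁ ≠ z₂ ∧
        ∀ x ∈ Set.Ico (0 : ℝ) L, (φ x = 0 ↔ x = z₁ ∨ x = z₂)) ∧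
      (∀ x, -(deriv (deriv φ) x) + w * φ x - φ x ^ 5 = 0) := by
  obtain ⟨m, hm, hT⟩ := exists_halfPeriod_eq hw (half_pos hL)
  have hm0 : m ≠ 0 := by rintro rfl; norm_num at hm; linarith
  have hF := isAngularSpeed_speed hm
  have hshift (x : ℝ) : phase (speed w m) (x + L) = phase (speed w m) x + 2 * π := by
    rw [← add_halves L, ← hT, ← add_assoc, halfPeriod, hF.phase_add_phaseTime periodic_speed,
      hF.phase_add_phaseTime periodic_speed, add_assoc, two_mul]
  obtain ⟨z₁, z₂, hz₁, hz₂, hz₁₂, hzeros⟩ := exists_two_zeros_cos_comp hF.strictMono_phase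
    hF.phase_surjective hF.phase_zero (by simpa [hF.phase_zero] using hshift 0)
  refine ⟨fun x => m * cos (phase (speed w m) x), ?_, fun x => ?_, ?_, fun x => ?_,
    ⟨z₁, z₂, hz₁, hz₂, hz₁₂, fun x hx => ?_⟩, quintic_ode_mul_cos hm hF.hasDerivAt_phase⟩
  · exact contDiff_const.mul (contDiff_cos.comp
      (contDiff_of_hasDerivAt_comp (contDiff_speed hm) hF.hasDerivAt_phase))
  · simp only [hF.phase_neg speed_neg, cos_neg]
  · rintro ⟨k, hk⟩
    have h0 := hk 0
    have hz := hk z₁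
    simp only [hF.phase_zero, cos_zero, mul_one] at h0
    simp only [(hzeros z₁ hz₁).2 (.inl rfl), mul_zero] at hz
    exact hm0 (h0.trans hz.symm)
  · simp only [hshift, cos_add_two_pi]
  · rw [mul_eq_zero, or_iff_right hm0, hzeros x hx]

end CnoidalWave

end

theorem stmt_0_general (L : ℝ) (hL : L > 2 * Real.pi) (c : ℝ)
    (hω : 1 - c ^ 2 ∈ Set.Ioo (4 * Real.pi ^ 2 / L ^ 2) 1) :
    ∃ φ : ℝ → ℝ,
      ContDiff ℝ (⊤ : ℕ∞) φ ∧
      (∀ x, φ (-x) = φ x) ∧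
      (¬ ∃ k : ℝ, ∀ x, φ x = k) ∧
      Function.Periodic φ L ∧
      (∃ z₁ z₂, z₁ ∈ Set.Ico (0 : ℝ) L ∧ z₂ ∈ Set.Ico (0 : ℝ) L ∧ z₁ ≠ z₂ ∧
        ∀ x ∈ Set.Ico (0 : ℝ) L, (φ x = 0 ↔ x = z₁ ∨ x = z₂)) ∧
      (∀ x, -(deriv (deriv φ) x) + (1 - c ^ 2) * φ x - φ x ^ 5 = 0) :=
  CnoidalWave.exists_cnoidal_wave ((by positivity : (0 : ℝ) ≤ 4 * π ^ 2 / L ^ 2).trans hω.1.le)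
    (by linarith [pi_pos])

theorem stmt_0 (L : ℝ) (hL : L > 2 * Real.pi) (c : ℝ) (hc : c ∈ Set.Ioo (-1 : ℝ) 1)
    (hω : 1 - c ^ 2 ∈ Set.Ioo (4 * Real.pi ^ 2 / L ^ 2) 1) :
    ∃ φ : ℝ → ℝ,
      ContDiff ℝ (⊤ : ℕ∞) φ ∧
      (∀ x, φ (-x) = φ x) ∧
      (¬ ∃ k : ℝ, ∀ x, φ x = k) ∧
      Function.Periodic φ L ∧
      (∃ z₁ z₂, z₁ ∈ Set.Ico (0 : ℝ) L ∧ z₂ ∈ Set.Ico (0 : ℝ) L ∧ z₁ ≠ z₂ ∧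
        ∀ x ∈ Set.Ico (0 : ℝ) L, (φ x = 0 ↔ x = z₁ ∨ x = z₂)) ∧
      (∀ x, -(deriv (deriv φ) x) + (1 - c ^ 2) * φ x - φ x ^ 5 = 0) :=
  stmt_0_general L hL c hω
end

section
/- Let L > 0, let Q: ℝ → ℝ be a continuous L-periodic function, let p be a nontrivial C² L-periodic solution of -f''(x) + Q(x)f(x) = 0, let y be a C² solution of the same equation with Wronskian p y' - p' y equal to a nonzero constant, and let θ ∈ ℝ be the constant with y(x + L) = y(x) + θ p(x) for all x. Then θ ≠ 0 if and only if every C² L-periodic solution of -f'' + Qf = 0 is a scalar multiple of p (equivalently, 0 is a simple eigenvalue of the Hill operator -d²/dx² + Q acting on L-periodic functions). -/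
open Real Set

lemma wronskian_const_aux (Q u v : ℝ → ℝ) (hu : ContDiff ℝ 2 u) (hv : ContDiff ℝ 2 v)
    (hueq : ∀ x, deriv (deriv u) x = Q x * u x)
    (hveq : ∀ x, deriv (deriv v) x = Q x * v x) :
    ∀ x z : ℝ, u x * deriv v x - deriv u x * v x = u z * deriv v z - deriv u z * v z := by
  have h21 : (2:WithTop ℕ∞) = 1 + 1 := by norm_num
  rw [h21] at hu hv
  have hu1 : ContDiff ℝ 1 (deriv u) := (contDiff_succ_iff_deriv.mp hu).2.2
  have hv1 : ContDiff ℝ 1 (deriv v) := (contDiff_succ_iff_deriv.mp hv).2.2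
  have hud : ∀ x, HasDerivAt u (deriv u x) x :=
    fun x => ((hu.differentiable (by norm_num)) x).hasDerivAt
  have hvd : ∀ x, HasDerivAt v (deriv v x) x :=
    fun x => ((hv.differentiable (by norm_num)) x).hasDerivAt
  have hud' : ∀ x, HasDerivAt (deriv u) (deriv (deriv u) x) x :=
    fun x => ((hu1.differentiable (by norm_num)) x).hasDerivAt
  have hvd' : ∀ x, HasDerivAt (deriv v) (deriv (deriv v) x) x :=
    fun x => ((hv1.differentiable (by norm_num)) x).hasDerivAt
  have hg : ∀ x, HasDerivAt (fun x => u x * deriv v x - deriv u x * v x) 0 x := by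
    intro x
    have h := (((hud x).mul (hvd' x)).sub ((hud' x).mul (hvd x)))
    have : deriv u x * deriv v x + u x * deriv (deriv v) x -
        (deriv (deriv u) x * v x + deriv u x * deriv v x) = 0 := by
      rw [hueq x, hveq x]; ring
    rwa [this] at h
  intro x z
  exact is_const_of_deriv_eq_zero (fun t => (hg t).differentiableAt)
    (fun t => (hg t).deriv) x z

theorem stmt_4 (L : ℝ) (hL : L > 0) (Q p y : ℝ → ℝ)
    (hQcont : Continuous Q) (hQper : Function.Periodic Q L)
    (hp : ContDiff ℝ 2 p) (hpper : Function.Periodic p L) (hpne : p ≠ 0)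
    (hpeq : ∀ x, -(deriv (deriv p) x) + Q x * p x = 0)
    (hy : ContDiff ℝ 2 y)
    (hyeq : ∀ x, -(deriv (deriv y) x) + Q x * y x = 0)
    (W : ℝ) (hW : W ≠ 0)
    (hWronsk : ∀ x, p x * deriv y x - deriv p x * y x = W)
    (θ : ℝ) (hθ : ∀ x, y (x + L) = y x + θ * p x) :
    θ ≠ 0 ↔
      ∀ f : ℝ → ℝ, ContDiff ℝ 2 f → Function.Periodic f L →
        (∀ x, -(deriv (deriv f) x) + Q x * f x = 0) → ∃ a : ℝ, f = a • p := by
  have hp'' : ∀ x, deriv (deriv p) x = Q x * p x := fun x => by linarith [hpeq x]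
  have hy'' : ∀ x, deriv (deriv y) x = Q x * y x := fun x => by linarith [hyeq x]
  constructor
  · intro hθne f hf hfper hfeq
    have hf'' : ∀ x, deriv (deriv f) x = Q x * f x := fun x => by linarith [hfeq x]
    set c1 := f 0 * deriv y 0 - deriv f 0 * y 0 with hc1def
    set c2 := p 0 * deriv f 0 - deriv p 0 * f 0 with hc2def
    have hW1 : ∀ x, f x * deriv y x - deriv f x * y x = c1 :=
      fun x => wronskian_const_aux Q f y hf hy hf'' hy'' x 0
    have hW2 : ∀ x, p x * deriv f x - deriv p x * f x = c2 :=
      fun x => wronskian_const_aux Q p f hp hf hp'' hf'' x 0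
    have hfval : ∀ x, W * f x = c1 * p x + c2 * y x := by
      intro x
      linear_combination (-(f x)) * hWronsk x + p x * hW1 x + y x * hW2 x
    -- periodicity forces c2 * θ = 0
    have hc2θ : ∀ x, c2 * θ * p x = 0 := by
      intro x
      have h1 := hfval (x + L)
      rw [hfper x, hpper x, hθ x] at h1
      have h2 := hfval x
      linarith [h1, h2]
    obtain ⟨x0, hx0⟩ : ∃ x0, p x0 ≠ 0 := Function.ne_iff.mp hpne
    have hc2 : c2 = 0 := by
      have := hc2θ x0
      rcases mul_eq_zero.mp this with h | h
      · rcases mul_eq_zero.mp h with h' | h'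
        · exact h'
        · exact absurd h' hθne
      · exact absurd h hx0
    refine ⟨c1 / W, ?_⟩
    funext x
    have := hfval x
    rw [hc2, zero_mul, add_zero] at this
    simp only [Pi.smul_apply, smul_eq_mul]
    field_simp
    linarith
  · intro hsimp hθ0
    have hyper : Function.Periodic y L := by
      intro x; rw [hθ x, hθ0]; ring
    obtain ⟨a, ha⟩ := hsimp y hy hyper hyeq
    have hWval := hWronsk 0
    rw [ha] at hWval
    have hd : deriv (a • p) 0 = a * deriv p 0 := by
      have : (a • p) = fun x => a * p x := by funext x; simp
      rw [this, deriv_const_mul _ ((hp.differentiable (by norm_num)) 0)]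
    rw [hd] at hWval
    simp only [Pi.smul_apply, smul_eq_mul] at hWval
    apply hW
    linarith [hWval]
end

section
/- Let L > 0, let Q: ℝ → ℝ be a continuous L-periodic function, let c ∈ (-1,1), and let λ ≤ 0. Then the following are equivalent: (i) there exists a nonzero pair (f,g) of C² L-periodic functions satisfying the system -f''(x) + f(x) + Q(x)f(x) - c·g(x) = λ f(x) and -c·f(x) + g(x) = λ g(x) for all x; (ii) there exists a nonzero C² L-periodic function h satisfying -h''(x) + (1-c²)h(x) + Q(x)h(x) = λ(1 - c²/(λ-1)) h(x) for all x. In particular λ(1 - c²/(λ-1)) ≤ 0. -/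
open Real Set

theorem stmt_6 (L : ℝ) (hL : 0 < L) (Q : ℝ → ℝ)
    (hQcont : Continuous Q) (hQper : Function.Periodic Q L)
    (c : ℝ) (hc : c ∈ Set.Ioo (-1 : ℝ) 1) (lam : ℝ) (hlam : lam ≤ 0) :
    ((∃ f g : ℝ → ℝ, ¬(f = 0 ∧ g = 0) ∧
        ContDiff ℝ 2 f ∧ ContDiff ℝ 2 g ∧
        Function.Periodic f L ∧ Function.Periodic g L ∧
        (∀ x, -(deriv (deriv f) x) + f x + Q x * f x - c * g x = lam * f x) ∧
        (∀ x, -(c * f x) + g x = lam * g x)) ↔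
      (∃ h : ℝ → ℝ, h ≠ 0 ∧ ContDiff ℝ 2 h ∧ Function.Periodic h L ∧
        ∀ x, -(deriv (deriv h) x) + (1 - c ^ 2) * h x + Q x * h x =
          lam * (1 - c ^ 2 / (lam - 1)) * h x)) ∧
    lam * (1 - c ^ 2 / (lam - 1)) ≤ 0 := by
  have h1lam : (0:ℝ) < 1 - lam := by linarith
  have hne : (1:ℝ) - lam ≠ 0 := ne_of_gt h1lam
  have hne' : lam - 1 ≠ 0 := by intro h; apply hne; linarith
  constructor
  · constructor
    · rintro ⟨f, g, hfg, hf2, hg2, hfp, hgp, heq1, heq2⟩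
      have hgf : ∀ x, g x = c / (1 - lam) * f x := by
        intro x
        have := heq2 x
        field_simp
        linarith
      refine ⟨f, ?_, hf2, hfp, ?_⟩
      · intro hf0
        apply hfg
        refine ⟨hf0, ?_⟩
        funext x
        have := hgf x
        rw [hf0] at this
        simpa using this
      · intro x
        have h1 := heq1 x
        rw [hgf x] at h1
        have goal : -(deriv (deriv f) x) + (1 - c ^ 2) * f x + Q x * f x =
            lam * (1 - c ^ 2 / (lam - 1)) * f x := by
          field_simp at h1 ⊢
          ring_nf at h1 ⊢
          linarith
        exact goal
    · rintro ⟨h, hh0, hh2, hhp, heq⟩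
      refine ⟨h, fun x => c / (1 - lam) * h x, ?_, hh2, contDiff_const.mul hh2, hhp,
        fun x => by simp [hhp x], ?_, ?_⟩
      · rintro ⟨h0, -⟩; exact hh0 h0
      · intro x
        have := heq x
        field_simp at this ⊢
        ring_nf at this ⊢
        linarith
      · intro x
        field_simp
        ring
  · have hdiv : c ^ 2 / (lam - 1) ≤ 0 :=
      div_nonpos_of_nonneg_of_nonpos (sq_nonneg c) (by linarith)
    have : (0:ℝ) < 1 - c ^ 2 / (lam - 1) := by linarith
    exact mul_nonpos_of_nonpos_of_nonneg hlam (le_of_lt this)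
end

section
/- Let L > 2π, let ω ∈ (4π²/L², 1), and let φ: ℝ → ℝ be a smooth, even, nonconstant, L-periodic solution of -φ'' + ωφ - φ⁵ = 0 having exactly two zeros in [0,L). Then every C² L-periodic function f satisfying -f'' + ωf - 5φ⁴f = λf for some λ < 0 is an even function, and every C² L-periodic function f satisfying -f'' + ωf - φ⁴f = λf for some λ < 0 is an even function. -/
/-!
Put `g x = f x - f (-x)`. Since `φ` is even, `g` solves the same equation
`g'' = (ω - λ - c φ⁴) g` (`c = 5` or `1`), and it vanishes at `0` and, by periodicity, at `L / 2`.
Differentiating the profile equation, `φ'` solves `φ''' = (ω - 5 φ⁴) φ'`, vanishes at `0` and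
`L / 2`, and has no zero in between. As `ω - 5 φ⁴ < ω - λ - c φ⁴`, Sturm comparison (the Wronskian
`g' φ' - g φ''` is strictly monotone up to the first zero of `g`) leaves only `g'(0) = 0`, and then
`g ≡ 0` by uniqueness for linear ODEs.

That `φ'` has no zero in `(0, L / 2)` comes from the energy `3 φ'² - 3 ω φ² + φ⁶`: it is constant,
positive (look at a zero of `φ`), and at a critical point it equals `a (a² - 3ω)` with `a = φ²`,
which pins `φ²` to one value at all critical points. Hence `φ` changes sign between any two
critical points, and a critical point in `(0, L / 2)` would give three zeros of `φ` in `[0, L)`.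
-/

open Set Filter Topology

theorem eq_zero_of_deriv_deriv_eq_mul_of_le {Q v : ℝ → ℝ} (hQ : Continuous Q)
    (hv : ContDiff ℝ 2 v) (hv'' : ∀ x, deriv (deriv v) x = Q x * v x) {p : ℝ}
    (hp : v p = 0) (hp' : deriv v p = 0) {x : ℝ} (hpx : p ≤ x) : v x = 0 := by
  obtain ⟨C, hC⟩ := (isCompact_Icc (a := p) (b := x)).exists_bound_of_continuousOn
    hQ.continuousOn
  have hY : ∀ t, HasDerivAt (fun t => (v t, deriv v t)) (deriv v t, Q t * v t) t := fun t =>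
    ((hv.differentiable two_ne_zero t).hasDerivAt.prodMk
      (hv.differentiable_deriv_two t).hasDerivAt).congr_deriv (by rw [hv'' t])
  have hbound : ∀ t ∈ Ico p x,
      ‖(deriv v t, Q t * v t)‖ ≤ max 1 C * ‖(v t, deriv v t)‖ := by
    intro t ht
    have hQt : |Q t| ≤ max 1 C := (hC t (Ico_subset_Icc_self ht)).trans (le_max_right _ _)
    simp only [Prod.norm_def, Real.norm_eq_abs, abs_mul, max_le_iff]
    constructor
    · nlinarith [le_max_left 1 C, le_max_right |v t| |deriv v t|, abs_nonneg (deriv v t)]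
    · nlinarith [le_max_left |v t| |deriv v t|, abs_nonneg (v t), abs_nonneg (Q t)]
  have := eq_zero_of_abs_deriv_le_mul_abs_self_of_eq_zero_right
    (continuous_iff_continuousAt.2 fun t => (hY t).continuousAt).continuousOn
    (fun t _ => (hY t).hasDerivWithinAt) (by simp [hp, hp']) hbound x ⟨hpx, le_rfl⟩
  exact congrArg Prod.fst this

theorem eq_zero_of_deriv_deriv_eq_mul {Q v : ℝ → ℝ} (hQ : Continuous Q)
    (hv : ContDiff ℝ 2 v) (hv'' : ∀ x, deriv (deriv v) x = Q x * v x) {p : ℝ}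
    (hp : v p = 0) (hp' : deriv v p = 0) (x : ℝ) : v x = 0 := by
  rcases le_total p x with hpx | hxp
  · exact eq_zero_of_deriv_deriv_eq_mul_of_le hQ hv hv'' hp hp' hpx
  · have hderiv : deriv (fun t => v (-t)) = fun t => -deriv v (-t) :=
      funext fun t => deriv_comp_neg v t
    simpa using eq_zero_of_deriv_deriv_eq_mul_of_le (Q := fun t => Q (-t)) (v := fun t => v (-t))
      (hQ.comp continuous_neg) (hv.comp contDiff_neg)
      (fun t => by rw [hderiv, deriv.fun_neg, deriv_comp_neg, hv'', neg_neg]) (p := -p)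
      (by simpa using hp) (by simp [hderiv, hp']) (neg_le_neg hxp)

theorem IsPreconnected.forall_pos_or_forall_neg {S : Set ℝ} {u : ℝ → ℝ} (hS : IsPreconnected S)
    (hu : ContinuousOn u S) (hne : ∀ x ∈ S, u x ≠ 0) :
    (∀ x ∈ S, 0 < u x) ∨ (∀ x ∈ S, u x < 0) := by
  by_contra! h
  obtain ⟨⟨x, hx, hux⟩, ⟨y, hy, huy⟩⟩ := h
  obtain ⟨z, hz, huz⟩ := hS.intermediate_value hx hy hu ⟨hux, huy⟩
  exact hne z hz huz

theorem deriv_nonpos_of_pos_left {v : ℝ → ℝ} {a c : ℝ} (hac : a < c) (hvc : v c = 0)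
    (hpos : ∀ x ∈ Ioo a c, 0 < v x) : deriv v c ≤ 0 := by
  by_contra! h
  obtain ⟨x, hsign, hx⟩ := (((eventually_nhdsWithin_sign_eq_of_deriv_pos h hvc).filter_mono
    nhdsWithin_le_nhds).and (Ioo_mem_nhdsLT hac)).exists
  rw [sign_pos (hpos x hx), sign_neg (sub_neg.2 hx.2)] at hsign
  exact absurd hsign (by decide)

theorem exists_first_zero {v : ℝ → ℝ} {a b : ℝ} (hv : Continuous v) (hab : a < b)
    (hva : v a = 0) (hv'a : 0 < deriv v a) (hvb : v b = 0) :
    ∃ c ∈ Ioc a b, v c = 0 ∧ ∀ x ∈ Ioo a c, 0 < v x := by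
  have hnear : ∀ᶠ x in 𝓝[>] a, 0 < v x := by
    filter_upwards [(eventually_nhdsWithin_sign_eq_of_deriv_pos hv'a hva).filter_mono
      nhdsWithin_le_nhds, self_mem_nhdsWithin]
      with x hsign hx
    rwa [sign_pos (sub_pos.2 hx), sign_eq_one_iff] at hsign
  obtain ⟨d, hd, hpos⟩ := mem_nhdsGT_iff_exists_Ioc_subset.1 (hnear.and (Ioo_mem_nhdsGT hab))
  set S := Icc d b ∩ v ⁻¹' {0}
  have hdb : d < b := (hpos (right_mem_Ioc.2 hd)).2.2
  have hSne : S.Nonempty := ⟨b, right_mem_Icc.2 hdb.le, hvb⟩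
  have hSbdd : BddBelow S := ⟨d, fun x hx => hx.1.1⟩
  have hcS : sInf S ∈ S :=
    (isClosed_Icc.inter (isClosed_singleton.preimage hv)).csInf_mem hSne hSbdd
  refine ⟨sInf S, ⟨hd.trans_le hcS.1.1, hcS.1.2⟩, hcS.2, fun x hx => ?_⟩
  by_contra! hvx
  have hdx : d < x := by
    by_contra! hxd
    exact hvx.not_gt (hpos ⟨hx.1, hxd⟩).1
  obtain ⟨y, hy, hvy⟩ := intermediate_value_Icc' hdx.le hv.continuousOn
    ⟨hvx, (hpos (right_mem_Ioc.2 hd)).1.le⟩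
  have := csInf_le hSbdd ⟨⟨hy.1, hy.2.trans (hx.2.le.trans hcS.1.2)⟩, hvy⟩
  linarith [hy.2, hx.2]

theorem sturm_comparison {P Q u v : ℝ → ℝ} {a c : ℝ} (hac : a < c) (hu : ContDiff ℝ 2 u)
    (hv : ContDiff ℝ 2 v) (hu'' : ∀ x ∈ Ioo a c, deriv (deriv u) x = P x * u x)
    (hv'' : ∀ x ∈ Ioo a c, deriv (deriv v) x = Q x * v x) (hPQ : ∀ x ∈ Ioo a c, P x < Q x)
    (hu_pos : ∀ x ∈ Ioo a c, 0 < u x) (hv_pos : ∀ x ∈ Ioo a c, 0 < v x) (hua : u a = 0)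
    (huc : 0 ≤ u c) (hva : v a = 0) (hvc : v c = 0) : False := by
  set W := fun x => deriv v x * u x - v x * deriv u x
  have hW : ∀ x, HasDerivAt W (deriv (deriv v) x * u x - v x * deriv (deriv u) x) x := by
    intro x
    have hu' := (hu.differentiable two_ne_zero x).hasDerivAt
    have hv' := (hv.differentiable two_ne_zero x).hasDerivAt
    exact (((hv.differentiable_deriv_two x).hasDerivAt.mul hu').sub
      (hv'.mul (hu.differentiable_deriv_two x).hasDerivAt)).congr_deriv (by ring)
  have hWmono : StrictMonoOn W (Icc a c) := by
    refine strictMonoOn_of_deriv_pos (convex_Icc a c)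
      (continuous_iff_continuousAt.2 fun x => (hW x).continuousAt).continuousOn fun x hx => ?_
    rw [interior_Icc] at hx
    rw [(hW x).deriv, hu'' x hx, hv'' x hx]
    nlinarith [mul_pos (mul_pos (sub_pos.2 (hPQ x hx)) (hu_pos x hx)) (hv_pos x hx)]
  have hWac := hWmono (left_mem_Icc.2 hac.le) (right_mem_Icc.2 hac.le) hac
  simp only [W, hua, hva, hvc] at hWac
  nlinarith [deriv_nonpos_of_pos_left hac hvc hv_pos]

theorem eq_zero_of_sturm_comparison {P Q u v : ℝ → ℝ} {a b : ℝ} (hab : a < b)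
    (hQ : Continuous Q) (hu : ContDiff ℝ 2 u) (hv : ContDiff ℝ 2 v)
    (hu'' : ∀ x, deriv (deriv u) x = P x * u x) (hv'' : ∀ x, deriv (deriv v) x = Q x * v x)
    (hPQ : ∀ x ∈ Ioo a b, P x < Q x) (hu_ne : ∀ x ∈ Ioo a b, u x ≠ 0) (hua : u a = 0)
    (hub : u b = 0) (hva : v a = 0) (hvb : v b = 0) (x : ℝ) : v x = 0 := by
  wlog hu_pos : ∀ x ∈ Ioo a b, 0 < u x generalizing u
  · refine this (hu.neg) (fun x => ?_) (fun x hx => neg_ne_zero.2 (hu_ne x hx))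
      (by simp [hua]) (by simp [hub]) fun x hx => ?_
    · simp [hu'']
    · exact neg_pos.2 (((isPreconnected_Ioo.forall_pos_or_forall_neg
        (hu.continuous.continuousOn) hu_ne).resolve_left hu_pos) x hx)
  wlog hv'a : 0 ≤ deriv v a generalizing v
  · simpa using this hv.neg (fun x => by simp [hv'']) (by simp [hva]) (by simp [hvb])
      (by simpa using (not_le.1 hv'a).le)
  rcases hv'a.eq_or_lt with hv'a | hv'a
  · exact eq_zero_of_deriv_deriv_eq_mul hQ hv hv'' hva hv'a.symm x
  obtain ⟨c, ⟨hac, hcb⟩, hvc, hv_pos⟩ := exists_first_zero hv.continuous hab hva hv'a hvb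
  have huc : 0 ≤ u c := by
    rcases hcb.lt_or_eq with hcb | rfl
    · exact (hu_pos c ⟨hac, hcb⟩).le
    · exact hub.ge
  have hsub : Ioo a c ⊆ Ioo a b := Ioo_subset_Ioo_right hcb
  exact (sturm_comparison hac hu hv (fun x _ => hu'' x) (fun x _ => hv'' x)
    (fun x hx => hPQ x (hsub hx)) (fun x hx => hu_pos x (hsub hx)) hv_pos hua huc hva hvc).elim

theorem eq_of_mul_sq_sub_eq {ω e a b : ℝ} (he : 0 < e) (ha : 0 ≤ a) (hb : 0 ≤ b)
    (hae : a * (a ^ 2 - 3 * ω) = e) (hbe : b * (b ^ 2 - 3 * ω) = e) : a = b := by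
  have ha' : 0 < a ^ 2 - 3 * ω := pos_of_mul_pos_right (hae ▸ he) ha
  have hfac : (a - b) * (a ^ 2 + a * b + b ^ 2 - 3 * ω) = 0 := by linear_combination hae - hbe
  rcases mul_eq_zero.1 hfac with h | h
  · linarith
  · nlinarith [mul_nonneg ha hb, sq_nonneg b]

theorem deriv_eq_zero_of_symm {φ : ℝ → ℝ} {a : ℝ} (h : ∀ x, φ (a - x) = φ x) :
    deriv φ (a / 2) = 0 := by
  have := deriv_comp_const_sub (f := φ) (a := a) (x := a / 2)
  rw [show (fun x => φ (a - x)) = φ from funext h, show a - a / 2 = a / 2 by ring] at this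
  linarith

theorem exists_zero_between_critical_points {φ : ℝ → ℝ} (hφ : Continuous φ)
    (hsq : ∀ c d, deriv φ c = 0 → deriv φ d = 0 → φ c ^ 2 = φ d ^ 2)
    (hloc : ∀ c, ¬ ∀ᶠ x in 𝓝 c, φ x = φ c) {u v : ℝ} (huv : u < v) (hu : deriv φ u = 0)
    (hv : deriv φ v = 0) (hu0 : φ u ≠ 0) : ∃ ζ ∈ Ioo u v, φ ζ = 0 := by
  have hv0 : φ v ≠ 0 := by
    intro h; apply hu0; simpa [h] using hsq u v hu hv
  have hext : ∀ c ∈ Icc u v, IsMinOn φ (Icc u v) c ∨ IsMaxOn φ (Icc u v) c →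
      φ c ^ 2 = φ u ^ 2 := by
    intro c hc hextr
    rcases eq_endpoints_or_mem_Ioo_of_mem_Icc hc with rfl | rfl | hc
    · rfl
    · exact hsq c u hv hu
    · have hnhds := Icc_mem_nhds hc.1 hc.2
      refine hsq c u ?_ hu
      rcases hextr with h | h
      · exact (h.isLocalMin hnhds).deriv_eq_zero
      · exact (h.isLocalMax hnhds).deriv_eq_zero
  have hIcc := nonempty_Icc.2 huv.le
  obtain ⟨m, hm, hmin⟩ := isCompact_Icc.exists_isMinOn hIcc hφ.continuousOn
  obtain ⟨M, hM, hmax⟩ := isCompact_Icc.exists_isMaxOn hIcc hφ.continuousOn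
  have hmM : φ m < φ M := by
    refine (hmin (left_mem_Icc.2 huv.le)).trans (hmax (left_mem_Icc.2 huv.le)) |>.lt_of_ne
      fun hEq => hloc ((u + v) / 2) ?_
    have hconst : ∀ x ∈ Icc u v, φ x = φ m := fun x hx =>
      le_antisymm (hEq ▸ hmax hx) (hmin hx)
    have hmid : (u + v) / 2 ∈ Ioo u v := ⟨by linarith, by linarith⟩
    filter_upwards [Icc_mem_nhds hmid.1 hmid.2] with x hx
    rw [hconst x hx, hconst _ (Ioo_subset_Icc_self hmid)]
  have hsign : φ m < 0 ∧ 0 < φ M := by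
    rcases sq_eq_sq_iff_eq_or_eq_neg.1 ((hext m hm (Or.inl hmin)).trans
      (hext M hM (Or.inr hmax)).symm) with h | h
    · exact absurd h hmM.ne
    · constructor <;> linarith
  obtain ⟨ζ, hζ, hφζ⟩ := isPreconnected_Icc.intermediate_value hm hM hφ.continuousOn
    ⟨hsign.1.le, hsign.2.le⟩
  refine ⟨ζ, ⟨hζ.1.lt_of_ne ?_, hζ.2.lt_of_ne ?_⟩, hφζ⟩
  · rintro rfl; exact hu0 hφζ
  · rintro rfl; exact hv0 hφζ

section Profile

variable {ω : ℝ} {φ : ℝ → ℝ}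

theorem eq_zero_of_eq_zero_of_deriv_eq_zero (hφ : ContDiff ℝ 2 φ)
    (hode : ∀ x, deriv (deriv φ) x = ω * φ x - φ x ^ 5) {p : ℝ} (hp : φ p = 0)
    (hp' : deriv φ p = 0) (x : ℝ) : φ x = 0 :=
  eq_zero_of_deriv_deriv_eq_mul (Q := fun x => ω - φ x ^ 4) (by fun_prop) hφ
    (fun x => by rw [hode]; ring) hp hp' x

theorem contDiff_deriv_of_ode (hφ : ContDiff ℝ 2 φ)
    (hode : ∀ x, deriv (deriv φ) x = ω * φ x - φ x ^ 5) : ContDiff ℝ 2 (deriv φ) := by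
  have hφ1 : ContDiff ℝ 1 φ := hφ.of_le one_le_two
  rw [show (2 : WithTop ℕ∞) = 1 + 1 by norm_num, contDiff_succ_iff_deriv, funext hode]
  exact ⟨hφ.differentiable_deriv_two, by simp, by fun_prop⟩

theorem deriv_deriv_deriv_of_ode (hφ : ContDiff ℝ 2 φ)
    (hode : ∀ x, deriv (deriv φ) x = ω * φ x - φ x ^ 5) (x : ℝ) :
    deriv (deriv (deriv φ)) x = (ω - 5 * φ x ^ 4) * deriv φ x := by
  have hd := (hφ.differentiable two_ne_zero x).hasDerivAt
  rw [funext hode, ((hd.const_mul ω).fun_sub (hd.fun_pow 5)).deriv]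
  push_cast
  ring

theorem energy_eq_of_ode (hφ : ContDiff ℝ 2 φ)
    (hode : ∀ x, deriv (deriv φ) x = ω * φ x - φ x ^ 5) (x y : ℝ) :
    3 * deriv φ x ^ 2 - 3 * ω * φ x ^ 2 + φ x ^ 6 =
      3 * deriv φ y ^ 2 - 3 * ω * φ y ^ 2 + φ y ^ 6 := by
  have hE : ∀ x, HasDerivAt (fun x => 3 * deriv φ x ^ 2 - 3 * ω * φ x ^ 2 + φ x ^ 6) 0 x := by
    intro x
    have hd := (hφ.differentiable two_ne_zero x).hasDerivAt
    have hd' := (hφ.differentiable_deriv_two x).hasDerivAt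
    exact ((((hd'.pow 2).const_mul 3).sub ((hd.pow 2).const_mul (3 * ω))).add
      (hd.pow 6)).congr_deriv (by rw [hode]; push_cast; ring)
  exact is_const_of_deriv_eq_zero (fun x => (hE x).differentiableAt) (fun x => (hE x).deriv) x y

theorem not_eventually_eq_of_ode (hφ : ContDiff ℝ 2 φ)
    (hode : ∀ x, deriv (deriv φ) x = ω * φ x - φ x ^ 5) (hnc : ¬ ∃ k : ℝ, ∀ x, φ x = k)
    (c : ℝ) : ¬ ∀ᶠ x in 𝓝 c, φ x = φ c := by
  intro hconst
  have hφ'c : deriv φ =ᶠ[𝓝 c] fun _ => 0 := by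
    simpa using (show φ =ᶠ[𝓝 c] fun _ => φ c from hconst).deriv
  have hφ' : ∀ x, deriv φ x = 0 :=
    eq_zero_of_deriv_deriv_eq_mul (Q := fun x => ω - 5 * φ x ^ 4) (by fun_prop)
      (contDiff_deriv_of_ode hφ hode) (deriv_deriv_deriv_of_ode hφ hode) hφ'c.eq_of_nhds
      (by simp [hφ'c.deriv_eq])
  exact hnc ⟨φ 0, fun x => is_const_of_deriv_eq_zero (hφ.differentiable two_ne_zero) hφ' x 0⟩

theorem sq_eq_sq_of_deriv_eq_zero (hφ : ContDiff ℝ 2 φ)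
    (hode : ∀ x, deriv (deriv φ) x = ω * φ x - φ x ^ 5) {z : ℝ} (hz : φ z = 0)
    (hz' : deriv φ z ≠ 0) {c d : ℝ} (hc : deriv φ c = 0) (hd : deriv φ d = 0) :
    φ c ^ 2 = φ d ^ 2 := by
  have hEc := energy_eq_of_ode hφ hode c z
  have hEd := energy_eq_of_ode hφ hode d z
  rw [hc, hz] at hEc
  rw [hd, hz] at hEd
  exact eq_of_mul_sq_sub_eq (ω := ω) (e := 3 * deriv φ z ^ 2) (by positivity) (sq_nonneg _)
    (sq_nonneg _) (by linear_combination hEc) (by linear_combination hEd)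

theorem deriv_ne_zero_of_mem_Ioo {L z₁ z₂ : ℝ} (hφ : ContDiff ℝ 2 φ)
    (hode : ∀ x, deriv (deriv φ) x = ω * φ x - φ x ^ 5) (heven : ∀ x, φ (-x) = φ x)
    (hper : Function.Periodic φ L) (hnc : ¬ ∃ k : ℝ, ∀ x, φ x = k)
    (hzeros : ∀ x ∈ Ico 0 L, φ x = 0 → x = z₁ ∨ x = z₂) (hz₁ : φ z₁ = 0) :
    ∀ m ∈ Ioo 0 (L / 2), deriv φ m ≠ 0 := by
  intro m hm hm'
  have hcrit : ∀ c, deriv φ c = 0 → φ c ≠ 0 := fun c hc h0 =>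
    hnc ⟨0, eq_zero_of_eq_zero_of_deriv_eq_zero hφ hode h0 hc⟩
  have hsq : ∀ c d, deriv φ c = 0 → deriv φ d = 0 → φ c ^ 2 = φ d ^ 2 := fun _ _ =>
    sq_eq_sq_of_deriv_eq_zero hφ hode hz₁ fun h => hcrit z₁ h hz₁
  have hloc := not_eventually_eq_of_ode hφ hode hnc
  have hsymm : ∀ x, φ (L - x) = φ x := fun x => hper.sub_eq'.trans (heven x)
  have h0 : deriv φ 0 = 0 := by simpa using deriv_eq_zero_of_symm (a := 0) (by simpa using heven)
  have hhalf : deriv φ (L / 2) = 0 := deriv_eq_zero_of_symm hsymm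
  obtain ⟨ζ₁, hζ₁, hφζ₁⟩ := exists_zero_between_critical_points hφ.continuous hsq hloc hm.1
    h0 hm' (hcrit 0 h0)
  obtain ⟨ζ₂, hζ₂, hφζ₂⟩ := exists_zero_between_critical_points hφ.continuous hsq hloc hm.2
    hm' hhalf (hcrit m hm')
  obtain ⟨hm₀, hmL⟩ := hm
  have h₁ := hzeros ζ₁ ⟨by linarith [hζ₁.1], by linarith [hζ₁.2]⟩ hφζ₁
  have h₂ := hzeros ζ₂ ⟨by linarith [hζ₂.1], by linarith [hζ₂.2]⟩ hφζ₂
  have h₃ := hzeros (L - ζ₂) ⟨by linarith [hζ₂.2], by linarith [hζ₂.1]⟩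
    ((hsymm ζ₂).trans hφζ₂)
  rcases h₁ with h₁ | h₁ <;> rcases h₂ with h₂ | h₂ <;> rcases h₃ with h₃ | h₃ <;>
    linarith [hζ₁.2, hζ₂.1, hζ₂.2]

theorem even_of_deriv_deriv_eq {L lam c : ℝ} {f : ℝ → ℝ} (hL : 0 < L) (hφ : ContDiff ℝ 2 φ)
    (hode : ∀ x, deriv (deriv φ) x = ω * φ x - φ x ^ 5) (heven : ∀ x, φ (-x) = φ x)
    (hper : Function.Periodic φ L) (hφ' : ∀ m ∈ Ioo 0 (L / 2), deriv φ m ≠ 0)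
    (hlam : lam < 0) (hc : c ≤ 5) (hf : ContDiff ℝ 2 f) (hfper : Function.Periodic f L)
    (hf'' : ∀ x, deriv (deriv f) x = (ω - lam - c * φ x ^ 4) * f x) (x : ℝ) :
    f (-x) = f x := by
  set g := fun x => f x - f (-x)
  have hfd := hf.differentiable two_ne_zero
  have hfd' := hf.differentiable_deriv_two
  have hg : ContDiff ℝ 2 g := hf.sub (hf.comp contDiff_neg)
  have hneg {h : ℝ → ℝ} (hh : Differentiable ℝ h) (x : ℝ) :
      HasDerivAt (fun x => h (-x)) (-deriv h (-x)) x :=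
    ((hh (-x)).hasDerivAt.comp x (hasDerivAt_neg x)).congr_deriv (by ring)
  have hg' : deriv g = fun x => deriv f x + deriv f (-x) := funext fun x =>
    (((hfd x).hasDerivAt.sub (hneg hfd x)).congr_deriv (sub_neg_eq_add _ _)).deriv
  have hg'' : ∀ x, deriv (deriv g) x = (ω - lam - c * φ x ^ 4) * g x := fun x => by
    rw [hg', ((hfd' x).hasDerivAt.fun_add (hneg hfd' x)).deriv, hf'', hf'', heven]
    ring
  have hsymm : ∀ x, φ (L - x) = φ x := fun x => hper.sub_eq'.trans (heven x)
  have hgx := eq_zero_of_sturm_comparison (P := fun x => ω - 5 * φ x ^ 4) (half_pos hL)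
    (by fun_prop) (contDiff_deriv_of_ode hφ hode) hg (deriv_deriv_deriv_of_ode hφ hode) hg''
    (fun x _ => by nlinarith [pow_nonneg (sq_nonneg (φ x)) 2]) hφ'
    (by simpa using deriv_eq_zero_of_symm (a := 0) (by simpa using heven))
    (deriv_eq_zero_of_symm hsymm) (by simp [g])
    (by simp only [g]; rw [← hfper (-(L / 2)), show -(L / 2) + L = L / 2 by ring, sub_self])
    (-x)
  simp only [g, neg_neg] at hgx
  linarith

end Profile

theorem stmt_12_general (L : ℝ) (ω : ℝ)
    (φ : ℝ → ℝ) (hφsmooth : ContDiff ℝ (⊤ : ℕ∞) φ)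
    (hφeven : ∀ x, φ (-x) = φ x)
    (hφnc : ¬ ∃ k : ℝ, ∀ x, φ x = k)
    (hφper : Function.Periodic φ L)
    (hφzeros : ∃ z₁ z₂, z₁ ∈ Set.Ico (0 : ℝ) L ∧ z₂ ∈ Set.Ico (0 : ℝ) L ∧ z₁ ≠ z₂ ∧
      ∀ x ∈ Set.Ico (0 : ℝ) L, (φ x = 0 ↔ x = z₁ ∨ x = z₂))
    (hφode : ∀ x, -(deriv (deriv φ) x) + ω * φ x - φ x ^ 5 = 0) :
    (∀ f : ℝ → ℝ, ∀ lam : ℝ, lam < 0 →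
      ContDiff ℝ 2 f → Function.Periodic f L →
      (∀ x, -(deriv (deriv f) x) + ω * f x - 5 * φ x ^ 4 * f x = lam * f x) →
      ∀ x, f (-x) = f x) ∧
    (∀ f : ℝ → ℝ, ∀ lam : ℝ, lam < 0 →
      ContDiff ℝ 2 f → Function.Periodic f L →
      (∀ x, -(deriv (deriv f) x) + ω * f x - φ x ^ 4 * f x = lam * f x) →
      ∀ x, f (-x) = f x) := by
  obtain ⟨z₁, z₂, hz₁, -, -, hzeros⟩ := hφzeros
  have hφ : ContDiff ℝ 2 φ := hφsmooth.of_le (WithTop.coe_le_coe.2 le_top)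
  have hode : ∀ x, deriv (deriv φ) x = ω * φ x - φ x ^ 5 := fun x => by
    linear_combination -hφode x
  have hφ' := deriv_ne_zero_of_mem_Ioo hφ hode hφeven hφper hφnc (fun x hx => (hzeros x hx).1)
    ((hzeros z₁ hz₁).2 (Or.inl rfl))
  have hL0 : 0 < L := hz₁.1.trans_lt hz₁.2
  refine ⟨fun f lam hlam hf hfper hf'' => ?_, fun f lam hlam hf hfper hf'' => ?_⟩
  · exact even_of_deriv_deriv_eq (c := 5) hL0 hφ hode hφeven hφper hφ' hlam le_rfl hf hfper
      fun x => by linear_combination -hf'' x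
  · exact even_of_deriv_deriv_eq (c := 1) hL0 hφ hode hφeven hφper hφ' hlam (by norm_num) hf
      hfper fun x => by linear_combination -hf'' x

theorem stmt_12 (L : ℝ) (hL : L > 2 * Real.pi) (ω : ℝ)
    (hω : ω ∈ Set.Ioo (4 * Real.pi ^ 2 / L ^ 2) 1)
    (φ : ℝ → ℝ) (hφsmooth : ContDiff ℝ (⊤ : ℕ∞) φ)
    (hφeven : ∀ x, φ (-x) = φ x)
    (hφnc : ¬ ∃ k : ℝ, ∀ x, φ x = k)
    (hφper : Function.Periodic φ L)
    (hφzeros : ∃ z₁ z₂, z₁ ∈ Set.Ico (0 : ℝ) L ∧ z₂ ∈ Set.Ico (0 : ℝ) L ∧ z₁ ≠ z₂ ∧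
      ∀ x ∈ Set.Ico (0 : ℝ) L, (φ x = 0 ↔ x = z₁ ∨ x = z₂))
    (hφode : ∀ x, -(deriv (deriv φ) x) + ω * φ x - φ x ^ 5 = 0) :
    (∀ f : ℝ → ℝ, ∀ lam : ℝ, lam < 0 →
      ContDiff ℝ 2 f → Function.Periodic f L →
      (∀ x, -(deriv (deriv f) x) + ω * f x - 5 * φ x ^ 4 * f x = lam * f x) →
      ∀ x, f (-x) = f x) ∧
    (∀ f : ℝ → ℝ, ∀ lam : ℝ, lam < 0 →
      ContDiff ℝ 2 f → Function.Periodic f L →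
      (∀ x, -(deriv (deriv f) x) + ω * f x - φ x ^ 4 * f x = lam * f x) →
      ∀ x, f (-x) = f x) :=
  stmt_12_general L ω φ hφsmooth hφeven hφnc hφper hφzeros hφode
end
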